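/- arXiv:1410.5312 — 2 statements merged into one kernel-verified Lean document; each statement's English description precedes it below -/
import Mathlib

section
/- Let m ≥ 2 be an integer and ω > 0. Define g : ℝ → ℝ by g(x) = ((−1)^m / (4 ω^{2m−1})) · ( (2m−3)·sin(ωx) − ωx·cos(ωx) + 2·∑_{k=1}^{m−2} (−1)^k (m−k−1) (ωx)^{2k−1} / (2k−1)! ) (the sum is empty when m = 2). Then g is infinitely differentiable and g^{(2m)}(x) + 2ω²·g^{(2m−2)}(x) + ω⁴·g^{(2m−4)}(x) = 0 for all x ∈ ℝ. -/
open Real Finset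

/-- The smooth factor of the fundamental solution `G_m(x) = sign(x) · g(x)`. -/
noncomputable def gFactor (m : ℕ) (ω : ℝ) (x : ℝ) : ℝ :=
  (-1 : ℝ) ^ m / (4 * ω ^ (2 * m - 1)) *
    ((2 * (m : ℝ) - 3) * Real.sin (ω * x) - ω * x * Real.cos (ω * x)
      + 2 * ∑ k ∈ Finset.Icc 1 (m - 2),
          (-1 : ℝ) ^ k * ((m : ℝ) - (k : ℝ) - 1) * (ω * x) ^ (2 * k - 1)
            / (Nat.factorial (2 * k - 1)))

noncomputable def trig (ω a b c d : ℝ) : ℝ → ℝ := fun x =>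
  a * Real.sin (ω * x) + b * Real.cos (ω * x)
    + c * (x * Real.sin (ω * x)) + d * (x * Real.cos (ω * x))

lemma contDiff_trig (ω a b c d : ℝ) : ContDiff ℝ (⊤ : ℕ∞) (trig ω a b c d) := by
  have h1 : ContDiff ℝ (⊤ : ℕ∞) fun x : ℝ => Real.sin (ω * x) :=
    Real.contDiff_sin.comp (contDiff_const.mul contDiff_id)
  have h2 : ContDiff ℝ (⊤ : ℕ∞) fun x : ℝ => Real.cos (ω * x) :=
    Real.contDiff_cos.comp (contDiff_const.mul contDiff_id)
  exact (((contDiff_const.mul h1).add (contDiff_const.mul h2)).add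
    (contDiff_const.mul (contDiff_id.mul h1))).add
    (contDiff_const.mul (contDiff_id.mul h2))

lemma deriv_trig (ω a b c d : ℝ) :
    deriv (trig ω a b c d) = trig ω (c - b * ω) (a * ω + d) (-(d * ω)) (c * ω) := by
  funext x
  have hs : HasDerivAt (fun y : ℝ => Real.sin (ω * y)) (Real.cos (ω * x) * ω) x :=
    (Real.hasDerivAt_sin (ω * x)).comp x (by simpa using (hasDerivAt_id x).const_mul ω)
  have hc : HasDerivAt (fun y : ℝ => Real.cos (ω * y)) (-Real.sin (ω * x) * ω) x :=
    (Real.hasDerivAt_cos (ω * x)).comp x (by simpa using (hasDerivAt_id x).const_mul ω)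
  have h : HasDerivAt (trig ω a b c d)
      (a * (Real.cos (ω * x) * ω) + b * (-Real.sin (ω * x) * ω)
        + c * (1 * Real.sin (ω * x) + x * (Real.cos (ω * x) * ω))
        + d * (1 * Real.cos (ω * x) + x * (-Real.sin (ω * x) * ω))) x := by
    unfold trig
    exact (((hs.const_mul a).add (hc.const_mul b)).add
      (((hasDerivAt_id x).mul hs).const_mul c)).add
      (((hasDerivAt_id x).mul hc).const_mul d)
  rw [h.deriv]
  unfold trig; ring

lemma exists_trig (ω : ℝ) :
    ∀ (n : ℕ) (a b c d : ℝ), ∃ a' b' c' d',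
      iteratedDeriv n (trig ω a b c d) = trig ω a' b' c' d' := by
  intro n
  induction n with
  | zero => exact fun a b c d => ⟨a, b, c, d, iteratedDeriv_zero⟩
  | succ n ih =>
    intro a b c d
    rw [iteratedDeriv_succ', deriv_trig]
    exact ih _ _ _ _

lemma trig_ode4 (ω a b c d : ℝ) (x : ℝ) :
    iteratedDeriv 4 (trig ω a b c d) x + 2 * ω ^ 2 * iteratedDeriv 2 (trig ω a b c d) x
      + ω ^ 4 * trig ω a b c d x = 0 := by
  have step : ∀ (n : ℕ) (a b c d : ℝ), iteratedDeriv (n + 1) (trig ω a b c d)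
      = iteratedDeriv n (trig ω (c - b * ω) (a * ω + d) (-(d * ω)) (c * ω)) := by
    intro n a b c d; rw [iteratedDeriv_succ', deriv_trig]
  have h4 : iteratedDeriv 4 (trig ω a b c d) x = _ :=
    congrFun ((step 3 a b c d).trans ((step 2 _ _ _ _).trans ((step 1 _ _ _ _).trans
      ((step 0 _ _ _ _).trans iteratedDeriv_zero)))) x
  have h2 : iteratedDeriv 2 (trig ω a b c d) x = _ :=
    congrFun ((step 1 a b c d).trans ((step 0 _ _ _ _).trans iteratedDeriv_zero)) x
  rw [h4, h2]
  unfold trig; ring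

lemma trig_ode_shift (ω a b c d : ℝ) (n : ℕ) (x : ℝ) :
    iteratedDeriv (4 + n) (trig ω a b c d) x
      + 2 * ω ^ 2 * iteratedDeriv (2 + n) (trig ω a b c d) x
      + ω ^ 4 * iteratedDeriv n (trig ω a b c d) x = 0 := by
  obtain ⟨a', b', c', d', h⟩ := exists_trig ω n a b c d
  have key : ∀ j : ℕ, iteratedDeriv (j + n) (trig ω a b c d)
      = iteratedDeriv j (trig ω a' b' c' d') := by
    intro j
    rw [← h]
    simp only [iteratedDeriv_eq_iterate]
    exact Function.iterate_add_apply deriv j n _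
  rw [key 4, key 2, h]
  exact trig_ode4 ω a' b' c' d' x

lemma iteratedDeriv_add' {n : ℕ} {f g : ℝ → ℝ} (hf : ContDiff ℝ n f) (hg : ContDiff ℝ n g)
    (x : ℝ) : iteratedDeriv n (fun y => f y + g y) x
      = iteratedDeriv n f x + iteratedDeriv n g x := by
  simp only [← iteratedDerivWithin_univ]
  exact iteratedDerivWithin_add (Set.mem_univ x) uniqueDiffOn_univ hf.contDiffWithinAt hg.contDiffWithinAt

lemma iteratedDeriv_const_mul' {n : ℕ} (c : ℝ) {f : ℝ → ℝ} (hf : ContDiff ℝ n f) (x : ℝ) :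
    iteratedDeriv n (fun y => c * f y) x = c * iteratedDeriv n f x := by
  simp only [← iteratedDerivWithin_univ]
  exact iteratedDerivWithin_const_mul (Set.mem_univ x) uniqueDiffOn_univ c hf.contDiffWithinAt

lemma iteratedDeriv_zero_fun (n : ℕ) :
    iteratedDeriv n (fun _ : ℝ => (0 : ℝ)) = fun _ => 0 := by
  induction n with
  | zero => exact iteratedDeriv_zero
  | succ n ih =>
    rw [iteratedDeriv_succ', show deriv (fun _ : ℝ => (0 : ℝ)) = fun _ => 0 from
      funext fun y => deriv_const y 0]
    exact ih

lemma iteratedDeriv_sum' {ι : Type*} {s : Finset ι} {f : ι → ℝ → ℝ} {n : ℕ}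
    (hf : ∀ i ∈ s, ContDiff ℝ n (f i)) (x : ℝ) :
    iteratedDeriv n (fun y => ∑ i ∈ s, f i y) x = ∑ i ∈ s, iteratedDeriv n (f i) x := by
  classical
  induction s using Finset.induction with
  | empty => simp [iteratedDeriv_zero_fun]
  | @insert a s ha ih =>
    simp only [Finset.sum_insert ha]
    rw [iteratedDeriv_add' (hf a (Finset.mem_insert_self a s))
      (ContDiff.sum fun i hi => hf i (Finset.mem_insert_of_mem hi)) x,
      ih fun i hi => hf i (Finset.mem_insert_of_mem hi)]

lemma itd_pow (n : ℕ) : ∀ j, j < n → ∀ x : ℝ, iteratedDeriv n (fun y : ℝ => y ^ j) x = 0 := by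
  induction n with
  | zero => exact fun j hj x => absurd hj (Nat.not_lt_zero j)
  | succ n ih =>
    intro j hj x
    rw [iteratedDeriv_succ', show deriv (fun y : ℝ => y ^ j) = fun y => (j : ℝ) * y ^ (j - 1) from
      funext fun y => deriv_pow_field j]
    cases j with
    | zero =>
      rw [show (fun y : ℝ => ((0 : ℕ) : ℝ) * y ^ (0 - 1)) = fun _ => (0 : ℝ) from
        funext fun y => by norm_num, iteratedDeriv_zero_fun]
    | succ j' =>
      rw [show (fun y : ℝ => ((j' + 1 : ℕ) : ℝ) * y ^ (j' + 1 - 1))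
          = fun y : ℝ => ((j' + 1 : ℕ) : ℝ) * y ^ j' from rfl,
        iteratedDeriv_const_mul' _ (f := fun y : ℝ => y ^ j') (by fun_prop) x, ih j' (by omega) x, mul_zero]

noncomputable def polyPart (m : ℕ) (ω : ℝ) : ℝ → ℝ := fun x =>
  2 * ∑ k ∈ Finset.Icc 1 (m - 2),
      (-1 : ℝ) ^ k * ((m : ℝ) - (k : ℝ) - 1) * (ω * x) ^ (2 * k - 1)
        / (Nat.factorial (2 * k - 1))

lemma contDiff_polyPart (m : ℕ) (ω : ℝ) : ContDiff ℝ (⊤ : ℕ∞) (polyPart m ω) := by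
  unfold polyPart
  exact contDiff_const.mul (ContDiff.sum fun k _ => ContDiff.div_const (by fun_prop) _)

lemma polyPart_zero (m : ℕ) (hm : 2 ≤ m) (ω : ℝ) {j : ℕ} (hj : 2 * m - 4 ≤ j) (x : ℝ) :
    iteratedDeriv j (polyPart m ω) x = 0 := by
  unfold polyPart
  rw [iteratedDeriv_const_mul' 2 (ContDiff.sum fun k _ => ContDiff.div_const (by fun_prop) _) x,
    iteratedDeriv_sum' (fun k _ => ContDiff.div_const (by fun_prop) _) x, Finset.sum_eq_zero, mul_zero]
  intro k hk
  obtain ⟨hk1, hk2⟩ := Finset.mem_Icc.mp hk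
  have hrw : (fun y : ℝ => (-1 : ℝ) ^ k * ((m : ℝ) - (k : ℝ) - 1) * (ω * y) ^ (2 * k - 1)
        / (Nat.factorial (2 * k - 1)))
      = fun y : ℝ => ((-1 : ℝ) ^ k * ((m : ℝ) - (k : ℝ) - 1) * ω ^ (2 * k - 1)
        / (Nat.factorial (2 * k - 1))) * y ^ (2 * k - 1) := by
    funext y; rw [mul_pow]; ring
  rw [hrw, iteratedDeriv_const_mul' _ (f := fun y : ℝ => y ^ (2 * k - 1)) (by fun_prop) x,
    itd_pow j (2 * k - 1) (by omega) x, mul_zero]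

/-- `g` is infinitely differentiable and satisfies
`g^{(2m)} + 2ω² g^{(2m-2)} + ω⁴ g^{(2m-4)} = 0`. -/
theorem gFactor_smooth_and_ode (m : ℕ) (hm : 2 ≤ m) (ω : ℝ) (hω : 0 < ω) :
    ContDiff ℝ (⊤ : ℕ∞) (gFactor m ω) ∧
      ∀ x : ℝ,
        iteratedDeriv (2 * m) (gFactor m ω) x
          + 2 * ω ^ 2 * iteratedDeriv (2 * m - 2) (gFactor m ω) x
          + ω ^ 4 * iteratedDeriv (2 * m - 4) (gFactor m ω) x = 0 := by
  have hg : gFactor m ω = fun x => ((-1 : ℝ) ^ m / (4 * ω ^ (2 * m - 1))) *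
      (trig ω (2 * (m : ℝ) - 3) 0 0 (-ω) x + polyPart m ω x) := by
    funext x; simp only [gFactor, trig, polyPart]; ring
  have hT := contDiff_trig ω (2 * (m : ℝ) - 3) 0 0 (-ω)
  have hP := contDiff_polyPart m ω
  constructor
  · rw [hg]; exact contDiff_const.mul (hT.add hP)
  · intro x
    have hgj : ∀ j, 2 * m - 4 ≤ j → iteratedDeriv j (gFactor m ω) x
        = ((-1 : ℝ) ^ m / (4 * ω ^ (2 * m - 1)))
          * iteratedDeriv j (trig ω (2 * (m : ℝ) - 3) 0 0 (-ω)) x := by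
      intro j hj
      rw [hg, iteratedDeriv_const_mul' _ ((hT.add hP).of_le (by exact_mod_cast le_top)) x,
        iteratedDeriv_add' (hT.of_le (by exact_mod_cast le_top)) (hP.of_le (by exact_mod_cast le_top)) x,
        polyPart_zero m hm ω hj x, add_zero]
    rw [hgj (2 * m) (by omega), hgj (2 * m - 2) (by omega), hgj (2 * m - 4) le_rfl]
    have h := trig_ode_shift ω (2 * (m : ℝ) - 3) 0 0 (-ω) (2 * m - 4) x
    rw [show 4 + (2 * m - 4) = 2 * m by omega, show 2 + (2 * m - 4) = 2 * m - 2 by omega] at h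
    linear_combination ((-1 : ℝ) ^ m / (4 * ω ^ (2 * m - 1))) * h
end

section
/- For every real q ≠ 1 and all integers n ≥ 1 and k ≥ 0: ∑_{γ=0}^{n−1} q^γ γ^k = (1/(1−q)) ∑_{i=0}^{k} (q/(1−q))^i Δ^i 0^k − (q^n/(1−q)) ∑_{i=0}^{k} (q/(1−q))^i Δ^i n^k, where Δ^i n^k = ∑_{l=0}^{i} (−1)^{i−l} binomial(i,l) (n+l)^k. -/
/-!
With `t = q/(1-q)` and `F x = ∑_{i ≤ k} tⁱ Δⁱ xᵏ`, the relation `Δⁱ f (x+1) = Δⁱ f x + Δⁱ⁺¹ f x`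
together with `q tⁱ = (1-q) tⁱ⁺¹` makes `F x - q F (x+1)` telescope in `i` to
`(1-q) (xᵏ - tᵏ⁺¹ Δᵏ⁺¹ xᵏ) = (1-q) xᵏ`. Multiplying by `q^γ` and summing over `γ < n` then
telescopes in `γ`, leaving `(F 0 - qⁿ F n)/(1-q)`.
-/

open Finset fwdDiff

section fwdDiff

variable {M G : Type*} [AddCommMonoid M] [AddCommGroup G] (h : M)

lemma fwdDiff_iter_apply_add_eq (f : M → G) (i : ℕ) (x : M) :
    (Δ_[h])^[i] f (x + h) = (Δ_[h])^[i] f x + (Δ_[h])^[i + 1] f x := by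
  rw [Function.iterate_succ_apply', fwdDiff, add_sub_cancel]

lemma fwdDiff_iter_pow_eq_sum {R : Type*} [CommRing R] (i k : ℕ) (y : R) :
    (Δ_[1])^[i] (fun r : R ↦ r ^ k) y
      = ∑ l ∈ range (i + 1), (-1 : R) ^ (i - l) * (i.choose l : R) * (y + l) ^ k := by
  simp [fwdDiff_iter_eq_sum_shift, zsmul_eq_mul]

variable {K : Type*} [Field K] {q : K}

lemma sum_pow_mul_fwdDiff_iter_sub_mul_shift (hq : q ≠ 1) (f : M → K) (k : ℕ) (x : M) :
    ∑ i ∈ range (k + 1), (q / (1 - q)) ^ i * (Δ_[h])^[i] f x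
        - q * ∑ i ∈ range (k + 1), (q / (1 - q)) ^ i * (Δ_[h])^[i] f (x + h)
      = (1 - q) * (f x - (q / (1 - q)) ^ (k + 1) * (Δ_[h])^[k + 1] f x) := by
  have h1 : 1 - q ≠ 0 := sub_ne_zero.2 hq.symm
  set a : ℕ → K := fun i ↦ (q / (1 - q)) ^ i * (Δ_[h])^[i] f x
  have hstep : ∀ i, (q / (1 - q)) ^ i * (Δ_[h])^[i] f x
      - q * ((q / (1 - q)) ^ i * (Δ_[h])^[i] f (x + h)) = (1 - q) * (a i - a (i + 1)) := by
    intro i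
    simp only [a, fwdDiff_iter_apply_add_eq, pow_succ]
    field_simp
    ring
  rw [mul_sum, ← sum_sub_distrib, sum_congr rfl fun i _ ↦ hstep i, ← mul_sum,
    sum_range_sub']
  simp [a]

lemma sum_range_pow_mul_eq_of_sub_mul_succ (hq : q ≠ 1)
    {F g : ℕ → K} (hFg : ∀ m, F m - q * F (m + 1) = (1 - q) * g m) (n : ℕ) :
    ∑ m ∈ range n, q ^ m * g m = (F 0 - q ^ n * F n) / (1 - q) := by
  have htel := sum_range_sub' (fun m ↦ q ^ m * F m) n
  rw [pow_zero, one_mul] at htel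
  rw [eq_div_iff (sub_ne_zero.2 hq.symm), sum_mul, ← htel]
  refine sum_congr rfl fun m _ ↦ ?_
  linear_combination (-q ^ m) * hFg m

end fwdDiff

theorem finite_geometric_power_sum_general (q : ℝ) (hq : q ≠ 1) (n k : ℕ) :
    ∑ γ ∈ Finset.range n, q ^ γ * (γ : ℝ) ^ k
      = 1 / (1 - q) * ∑ i ∈ Finset.range (k + 1), (q / (1 - q)) ^ i *
            (∑ l ∈ Finset.range (i + 1),
              (-1 : ℝ) ^ (i - l) * (Nat.choose i l : ℝ) * (l : ℝ) ^ k)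
        - q ^ n / (1 - q) * ∑ i ∈ Finset.range (k + 1), (q / (1 - q)) ^ i *
            (∑ l ∈ Finset.range (i + 1),
              (-1 : ℝ) ^ (i - l) * (Nat.choose i l : ℝ) * ((n : ℝ) + (l : ℝ)) ^ k) := by
  set F : ℕ → ℝ := fun m ↦
    ∑ i ∈ range (k + 1), (q / (1 - q)) ^ i * (Δ_[1])^[i] (fun r : ℝ ↦ r ^ k) m
  have hF : ∀ m : ℕ, F m - q * F (m + 1) = (1 - q) * (m : ℝ) ^ k := fun m ↦ by
    simpa [F, fwdDiff_iter_pow_eq_zero_of_lt k.lt_succ_self] using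
      sum_pow_mul_fwdDiff_iter_sub_mul_shift 1 hq (fun r : ℝ ↦ r ^ k) k m
  rw [sum_range_pow_mul_eq_of_sub_mul_succ hq hF n]
  simp only [F, fwdDiff_iter_pow_eq_sum, Nat.cast_zero, zero_add]
  ring

/-- Hamming's summation formula: for `q ≠ 1`, `n ≥ 1`, `k ≥ 0`,
`∑_{γ=0}^{n-1} q^γ γ^k = (1/(1-q)) ∑_{i=0}^k (q/(1-q))^i Δ^i 0^k
  − (q^n/(1-q)) ∑_{i=0}^k (q/(1-q))^i Δ^i n^k`. -/
theorem finite_geometric_power_sum (q : ℝ) (hq : q ≠ 1) (n k : ℕ) (hn : 1 ≤ n) :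
    ∑ γ ∈ Finset.range n, q ^ γ * (γ : ℝ) ^ k
      = 1 / (1 - q) * ∑ i ∈ Finset.range (k + 1), (q / (1 - q)) ^ i *
            (∑ l ∈ Finset.range (i + 1),
              (-1 : ℝ) ^ (i - l) * (Nat.choose i l : ℝ) * (l : ℝ) ^ k)
        - q ^ n / (1 - q) * ∑ i ∈ Finset.range (k + 1), (q / (1 - q)) ^ i *
            (∑ l ∈ Finset.range (i + 1),
              (-1 : ℝ) ^ (i - l) * (Nat.choose i l : ℝ) * ((n : ℝ) + (l : ℝ)) ^ k) :=
  finite_geometric_power_sum_general q hq n k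
end
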